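/- arXiv:2405.13885 — 3 statements merged into one kernel-verified Lean document; each statement's English description precedes it below -/
import Mathlib

section
/- If μ is a Hermitian M×M complex matrix (the dipole operator), then for any eigenbasis index n₀ ∈ {0,…,M−1} and any real ω, the broadened dipole auto-correlation function is a nonnegatively weighted combination of window functions centered at the transition energies: Σ_{t=0}^{N−1} (α_t/√N) e^{−iωt} ⟨λ_{n₀}| e^{iHt} μ e^{−iHt} μ |λ_{n₀}⟩ = Σ_{n₁=0}^{M−1} |μ_{n₁ n₀}|² · L(λ_{n₀} − λ_{n₁} − ω). -/
open Matrix Complex BigOperators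

/-- The window (line shape) function `L(ω) = (1/√N) Σ_{k<N} α_k e^{ikω}`. -/
noncomputable def windowL (N : ℕ) (α : Fin N → ℂ) (ω : ℝ) : ℂ :=
  (1 / (Real.sqrt N : ℂ)) *
    ∑ k : Fin N, α k * Complex.exp (Complex.I * ((k : ℕ) : ℂ) * (ω : ℂ))

/-- The time-evolution operator `e^{iHs}` as a matrix exponential. -/
noncomputable def timeEvo {M : ℕ} (H : Matrix (Fin M) (Fin M) ℂ) (s : ℝ) :
    Matrix (Fin M) (Fin M) ℂ :=
  NormedSpace.exp (((s : ℂ) * Complex.I) • H)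

/-- Matrix element `V_{mn} = ⟨λ_m|V|λ_n⟩` in the eigenbasis `v`. -/
noncomputable def matElem {M : ℕ} (v : Fin M → Fin M → ℂ)
    (V : Matrix (Fin M) (Fin M) ℂ) (m n : Fin M) : ℂ :=
  star (v m) ⬝ᵥ (V *ᵥ v n)

/-!
Let `U` be the matrix whose columns are the eigenvectors `v j`. Orthonormality makes `U` unitary,
so `H = U diag(λ) Uᴴ` and `e^{iHt} = U diag(e^{iλt}) Uᴴ`. Conjugated by `U`, the correlation
becomes the diagonal entry `Σ_{n₁} e^{i(λ_{n₀} - λ_{n₁})t} μ_{n₀n₁} μ_{n₁n₀}`, and hermiticity of `μ`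
turns `μ_{n₀n₁} μ_{n₁n₀}` into `|μ_{n₁n₀}|²`; summing against the window gives `L`.
-/

section Conjugation

variable {n R : Type*} [Fintype n] [CommRing R] [StarRing R]

lemma star_dotProduct_mulVec_eq_apply (v : n → n → R) (A : Matrix n n R) (i j : n) :
    star (v i) ⬝ᵥ (A *ᵥ v j) = ((of v)ᵀᴴ * A * (of v)ᵀ) i j := by
  rw [mul_mul_apply]; rfl

variable [DecidableEq n]

lemma conjTranspose_mul_self_eq_one_of_orthonormal (v : n → n → R)
    (hv : ∀ i j, star (v i) ⬝ᵥ v j = if i = j then (1 : R) else 0) :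
    (of v)ᵀᴴ * (of v)ᵀ = 1 := by
  ext i j
  have h := star_dotProduct_mulVec_eq_apply v 1 i j
  rwa [one_mulVec, Matrix.mul_one, hv, ← one_apply, eq_comm] at h

omit [StarRing R] in
lemma mul_eq_mul_diagonal_of_mulVec_eq_smul (v : n → n → R) {H : Matrix n n R} {d : n → R}
    (h : ∀ j, H *ᵥ v j = d j • v j) : H * (of v)ᵀ = (of v)ᵀ * diagonal d := by
  ext i j
  rw [mul_diagonal, mul_comm]
  exact congrFun (h j) i

lemma eq_mul_diagonal_mul_conjTranspose {U H : Matrix n n R} (hU : Uᴴ * U = 1) (d : n → R)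
    (hH : H * U = U * diagonal d) : H = U * diagonal d * Uᴴ := by
  rw [← hH, Matrix.mul_assoc, mul_eq_one_comm.mp hU, Matrix.mul_one]

lemma conjTranspose_mul_conj_mul_conj_mul_mul {U : Matrix n n R} (hU : Uᴴ * U = 1)
    (a b : n → R) (A : Matrix n n R) :
    Uᴴ * (U * diagonal a * Uᴴ * A * (U * diagonal b * Uᴴ) * A) * U
      = diagonal a * (Uᴴ * A * U) * diagonal b * (Uᴴ * A * U) := by
  have hU' (X : Matrix n n R) : Uᴴ * (U * X) = X := by rw [← Matrix.mul_assoc, hU, Matrix.one_mul]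
  simp only [Matrix.mul_assoc, hU']

omit [StarRing R] in
lemma diagonal_mul_mul_diagonal_mul_apply (a b : n → R) (A B : Matrix n n R) (i k : n) :
    (diagonal a * A * diagonal b * B) i k = ∑ j, a i * A i j * b j * B j k := by
  rw [mul_apply]
  simp only [mul_diagonal, diagonal_mul]

end Conjugation

lemma exp_mul_diagonal_mul_conjTranspose {n : Type*} [Fintype n] [DecidableEq n]
    {U : Matrix n n ℂ} (hU : Uᴴ * U = 1) (d : n → ℂ) :
    NormedSpace.exp (U * diagonal d * Uᴴ) = U * diagonal (fun i => cexp (d i)) * Uᴴ := by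
  rw [← inv_eq_left_inv hU, exp_conj _ _ (IsUnit.of_mul_eq_one_right _ hU), exp_diagonal,
    Pi.exp_def, Complex.exp_eq_exp_ℂ]

lemma timeEvo_eq_mul_diagonal_mul_conjTranspose {M : ℕ} {H U : Matrix (Fin M) (Fin M) ℂ}
    (hU : Uᴴ * U = 1) {d : Fin M → ℝ}
    (hH : H = U * diagonal (fun k => (d k : ℂ)) * Uᴴ) (s : ℝ) :
    timeEvo H s = U * diagonal (fun k => cexp (s * I * d k)) * Uᴴ := by
  rw [timeEvo, hH, ← Matrix.smul_mul, ← Matrix.mul_smul, ← diagonal_smul,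
    exp_mul_diagonal_mul_conjTranspose hU]
  rfl

lemma sum_exp_mul_exp_eq_windowL (N : ℕ) (α : Fin N → ℂ) (ω a b : ℝ) :
    ∑ t : Fin N, α t / (Real.sqrt N : ℂ) * cexp (-(I * ω * ((t : ℕ) : ℂ))) *
        (cexp ((((t : ℕ) : ℝ) : ℂ) * I * a) * cexp (((-((t : ℕ) : ℝ) : ℝ) : ℂ) * I * b))
      = windowL N α (a - b - ω) := by
  rw [windowL, Finset.mul_sum]
  refine Finset.sum_congr rfl fun t _ => ?_
  rw [← Complex.exp_add, mul_assoc, ← Complex.exp_add]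
  push_cast
  ring_nf

theorem broadened_dipole_autocorrelation_general
    (M N : ℕ)
    (H : Matrix (Fin M) (Fin M) ℂ)
    (v : Fin M → Fin M → ℂ) (lam : Fin M → ℝ)
    (hortho : ∀ m n, star (v m) ⬝ᵥ v n = if m = n then (1 : ℂ) else 0)
    (heig : ∀ n, H *ᵥ v n = (lam n : ℂ) • v n)
    (μ : Matrix (Fin M) (Fin M) ℂ) (hμ : μ.IsHermitian)
    (α : Fin N → ℂ) (n₀ : Fin M) (ω : ℝ) :
    (∑ t : Fin N, (α t / (Real.sqrt N : ℂ)) *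
        Complex.exp (-(Complex.I * (ω : ℂ) * ((t : ℕ) : ℂ))) *
        (star (v n₀) ⬝ᵥ
          ((timeEvo H ((t : ℕ) : ℝ) * μ * timeEvo H (-((t : ℕ) : ℝ)) * μ) *ᵥ v n₀)))
      = ∑ n₁ : Fin M,
          ((‖matElem v μ n₁ n₀‖ ^ 2 : ℝ) : ℂ) *
            windowL N α (lam n₀ - lam n₁ - ω) := by
  simp only [matElem, star_dotProduct_mulVec_eq_apply]
  set U := (of v)ᵀ
  have hU : Uᴴ * U = 1 := conjTranspose_mul_self_eq_one_of_orthonormal v hortho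
  have hHU : H = U * diagonal (fun k => (lam k : ℂ)) * Uᴴ :=
    eq_mul_diagonal_mul_conjTranspose hU _ (mul_eq_mul_diagonal_of_mulVec_eq_smul v heig)
  have hμ' : (Uᴴ * μ * U).IsHermitian := isHermitian_conjTranspose_mul_mul U hμ
  simp only [timeEvo_eq_mul_diagonal_mul_conjTranspose hU hHU,
    conjTranspose_mul_conj_mul_conj_mul_mul hU, diagonal_mul_mul_diagonal_mul_apply, Finset.mul_sum]
  rw [Finset.sum_comm]
  refine Finset.sum_congr rfl fun n₁ _ => ?_
  rw [← sum_exp_mul_exp_eq_windowL, Finset.mul_sum]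
  refine Finset.sum_congr rfl fun t _ => ?_
  rw [← hμ'.apply n₀ n₁, Complex.star_def, Complex.sq_norm, ← Complex.mul_conj]
  ring

/-- Broadened linear absorption spectrum in the dipole approximation: for a Hermitian
dipole operator `μ`, the broadened dipole auto-correlation is a nonnegatively weighted
combination of window functions centered at the transition energies,
`Σ_t (α_t/√N) e^{-iωt} ⟨λ_{n₀}|e^{iHt} μ e^{-iHt} μ|λ_{n₀}⟩
  = Σ_{n₁} |μ_{n₁n₀}|² L(λ_{n₀} - λ_{n₁} - ω)`. -/
theorem broadened_dipole_autocorrelation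
    (M N : ℕ) (hN : 1 ≤ N)
    (H : Matrix (Fin M) (Fin M) ℂ) (hH : H.IsHermitian)
    (v : Fin M → Fin M → ℂ) (lam : Fin M → ℝ)
    (hortho : ∀ m n, star (v m) ⬝ᵥ v n = if m = n then (1 : ℂ) else 0)
    (heig : ∀ n, H *ᵥ v n = (lam n : ℂ) • v n)
    (μ : Matrix (Fin M) (Fin M) ℂ) (hμ : μ.IsHermitian)
    (α : Fin N → ℂ) (n₀ : Fin M) (ω : ℝ) :
    (∑ t : Fin N, (α t / (Real.sqrt N : ℂ)) *
        Complex.exp (-(Complex.I * (ω : ℂ) * ((t : ℕ) : ℂ))) *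
        (star (v n₀) ⬝ᵥ
          ((timeEvo H ((t : ℕ) : ℝ) * μ * timeEvo H (-((t : ℕ) : ℝ)) * μ) *ᵥ v n₀)))
      = ∑ n₁ : Fin M,
          ((‖matElem v μ n₁ n₀‖ ^ 2 : ℝ) : ℂ) *
            windowL N α (lam n₀ - lam n₁ - ω) :=
  broadened_dipole_autocorrelation_general M N H v lam hortho heig μ hμ α n₀ ω
end

section
/- For every integer D ≥ 1, matrices V^(0),…,V^(D) on ℂ^M, eigenbasis indices n₀, m ∈ {0,…,M−1}, and integers ω₁,…,ω_D, the amplitude of the GQPE circuit onto the frequency outcome (ω₁,…,ω_D) and final system eigenstate |λ_m⟩ satisfies: Σ_{t₁,…,t_D = 0}^{N−1} ( ∏_{k=1}^{D} (α_{t_k}/√N) e^{−2πi t_k ω_k / N} ) ⟨λ_m| V^(0)_I(t_D) V^(1)_I(t_{D−1}) ⋯ V^(D−1)_I(t₁) V^(D) |λ_{n₀}⟩ = Σ_{n₁,…,n_D = 0}^{M−1} V^(0)_{m n₁} ( ∏_{j=2}^{D} V^(j−1)_{n_{j−1} n_j} ) V^(D)_{n_D n₀} · L(λ_m − λ_{n₁}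 − 2π ω_D/N) · ∏_{j=2}^{D} L(λ_{n_{j−1}} − λ_{n_j} − 2π ω_{D−j+1}/N). Consequently the probability of the frequency outcome (ω₁,…,ω_D) upon measuring all registers is Σ_{m=0}^{M−1} of the squared modulus of this amplitude. -/
open Matrix Complex BigOperators

/-- The interaction-picture operator `V_I(t) = e^{iHt} V e^{-iHt}`. -/
noncomputable def iPic {M : ℕ} (H V : Matrix (Fin M) (Fin M) ℂ) (t : ℝ) :
    Matrix (Fin M) (Fin M) ℂ :=
  timeEvo H t * V * timeEvo H (-t)

/-- The chain `(m, n₁, …, n_D)` of eigenbasis indices. -/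
def chain {M D : ℕ} (m : Fin M) (n : Fin D → Fin M) : Fin (D + 1) → Fin M :=
  Fin.cons m n

/-! In the basis of eigenvectors `v n` (the unitary `(of v)ᵀ`), `e^{iHt}` is diagonal, so each
interaction-picture factor multiplies the matrix element `V_{ab}` by the phase `e^{it(λ_a - λ_b)}`.
Expanding the matrix element of the product as a sum over index chains, the sum over the times
`t_k` factorizes, and each factor `Σ_s (α_s/√N) e^{-2πisω/N} e^{isΔ}` is `L(Δ - 2πω/N)`. -/

namespace Matrix

theorem list_prod_map_mul_apply {R : Type*} [CommSemiring R] {M : ℕ} :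
    ∀ {D : ℕ} (A : Fin D → Matrix (Fin M) (Fin M) R) (B : Matrix (Fin M) (Fin M) R)
      (i k : Fin M),
    (((List.finRange D).map A).prod * B) i k =
      ∑ n : Fin D → Fin M,
        (∏ j, A j (chain i n j.castSucc) (chain i n j.succ)) * B (chain i n (Fin.last D)) k
  | 0, A, B, i, k => by simp [chain]
  | D + 1, A, B, i, k => by
    rw [List.finRange_succ, List.map_cons, List.map_map, List.prod_cons, mul_assoc, mul_apply,
      ← (Fin.consEquiv fun _ => Fin M).sum_comp, Fintype.sum_prod_type]
    refine Finset.sum_congr rfl fun l _ => ?_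
    rw [list_prod_map_mul_apply, Finset.mul_sum]
    refine Finset.sum_congr rfl fun n _ => ?_
    simp [chain, Fin.prod_univ_succ, mul_assoc]

end Matrix

section Eigenbasis

variable {M : ℕ} {v : Fin M → Fin M → ℂ}

theorem conjTranspose_mul_self_of_orthonormal
    (hortho : ∀ m n, star (v m) ⬝ᵥ v n = if m = n then (1 : ℂ) else 0) :
    (of v)ᵀᴴ * (of v)ᵀ = 1 := by
  ext m n
  simpa [mul_apply, one_apply, dotProduct] using hortho m n

theorem matElem_eq_conj (A : Matrix (Fin M) (Fin M) ℂ) (m n : Fin M) :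
    matElem v A m n = ((of v)ᵀᴴ * A * (of v)ᵀ) m n := by
  simp only [matElem, dotProduct, Pi.star_apply, RCLike.star_def, mulVec, Finset.mul_sum,
    mul_apply, conjTranspose_apply, transpose_apply, of_apply, Finset.sum_mul, mul_assoc]
  exact Finset.sum_comm

theorem conj_eigen_eq_diagonal {H : Matrix (Fin M) (Fin M) ℂ} {lam : Fin M → ℝ}
    (hortho : ∀ m n, star (v m) ⬝ᵥ v n = if m = n then (1 : ℂ) else 0)
    (heig : ∀ n, H *ᵥ v n = (lam n : ℂ) • v n) :
    (of v)ᵀᴴ * H * (of v)ᵀ = diagonal fun n => (lam n : ℂ) := by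
  have hcols : H * (of v)ᵀ = (of v)ᵀ * diagonal fun n => (lam n : ℂ) := by
    ext i n
    rw [mul_diagonal]
    simpa [mulVec, dotProduct, mul_apply, mul_comm] using congrFun (heig n) i
  rw [mul_assoc, hcols, ← mul_assoc, conjTranspose_mul_self_of_orthonormal hortho, one_mul]

theorem conj_mul_of_orthonormal
    (hortho : ∀ m n, star (v m) ⬝ᵥ v n = if m = n then (1 : ℂ) else 0)
    (A B : Matrix (Fin M) (Fin M) ℂ) :
    (of v)ᵀᴴ * (A * B) * (of v)ᵀ = ((of v)ᵀᴴ * A * (of v)ᵀ) * ((of v)ᵀᴴ * B * (of v)ᵀ) := by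
  have hright : (of v)ᵀ * (of v)ᵀᴴ = 1 :=
    mul_eq_one_comm.mp (conjTranspose_mul_self_of_orthonormal hortho)
  simp only [Matrix.mul_assoc, ← Matrix.mul_assoc (of v)ᵀ, hright, Matrix.one_mul]

theorem conj_list_prod_mul_of_orthonormal
    (hortho : ∀ m n, star (v m) ⬝ᵥ v n = if m = n then (1 : ℂ) else 0)
    (l : List (Matrix (Fin M) (Fin M) ℂ)) (B : Matrix (Fin M) (Fin M) ℂ) :
    (of v)ᵀᴴ * (l.prod * B) * (of v)ᵀ =
      (l.map fun A => (of v)ᵀᴴ * A * (of v)ᵀ).prod * ((of v)ᵀᴴ * B * (of v)ᵀ) := by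
  induction l with
  | nil => simp
  | cons A l ih =>
    rw [List.prod_cons, Matrix.mul_assoc A, conj_mul_of_orthonormal hortho, ih]
    simp only [List.map_cons, List.prod_cons, Matrix.mul_assoc]

theorem matElem_list_prod_mul
    (hortho : ∀ m n, star (v m) ⬝ᵥ v n = if m = n then (1 : ℂ) else 0) {D : ℕ}
    (W : Fin D → Matrix (Fin M) (Fin M) ℂ) (B : Matrix (Fin M) (Fin M) ℂ) (m n₀ : Fin M) :
    matElem v (((List.finRange D).map W).prod * B) m n₀ =
      ∑ n : Fin D → Fin M,
        (∏ j, matElem v (W j) (chain m n j.castSucc) (chain m n j.succ)) *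
          matElem v B (chain m n (Fin.last D)) n₀ := by
  simp only [matElem_eq_conj]
  rw [conj_list_prod_mul_of_orthonormal hortho, List.map_map, list_prod_map_mul_apply]
  rfl

theorem conj_timeEvo_eq_diagonal {H : Matrix (Fin M) (Fin M) ℂ} {lam : Fin M → ℝ}
    (hortho : ∀ m n, star (v m) ⬝ᵥ v n = if m = n then (1 : ℂ) else 0)
    (heig : ∀ n, H *ᵥ v n = (lam n : ℂ) • v n) (s : ℝ) :
    (of v)ᵀᴴ * timeEvo H s * (of v)ᵀ =
      diagonal fun n => Complex.exp ((s : ℂ) * Complex.I * lam n) := by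
  have hleft := conjTranspose_mul_self_of_orthonormal hortho
  have hinv : (of v)ᵀ⁻¹ = (of v)ᵀᴴ := inv_eq_left_inv hleft
  have hunit : IsUnit (of v)ᵀ := (isUnit_iff_isUnit_det _).mpr (isUnit_det_of_left_inverse hleft)
  rw [timeEvo, ← hinv, ← exp_conj' _ _ hunit, mul_smul_comm, smul_mul_assoc, hinv,
    conj_eigen_eq_diagonal hortho heig, ← diagonal_smul, exp_diagonal]
  congr 1
  ext n
  simp [Complex.exp_eq_exp_ℂ, mul_assoc]

theorem matElem_iPic {H : Matrix (Fin M) (Fin M) ℂ} {lam : Fin M → ℝ}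
    (hortho : ∀ m n, star (v m) ⬝ᵥ v n = if m = n then (1 : ℂ) else 0)
    (heig : ∀ n, H *ᵥ v n = (lam n : ℂ) • v n) (W : Matrix (Fin M) (Fin M) ℂ) (t : ℝ)
    (a b : Fin M) :
    matElem v (iPic H W t) a b =
      Complex.exp (Complex.I * t * ((lam a - lam b : ℝ) : ℂ)) * matElem v W a b := by
  rw [matElem_eq_conj, matElem_eq_conj, iPic, conj_mul_of_orthonormal hortho,
    conj_mul_of_orthonormal hortho, conj_timeEvo_eq_diagonal hortho heig,
    conj_timeEvo_eq_diagonal hortho heig, mul_diagonal, diagonal_mul, mul_right_comm,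
    ← Complex.exp_add]
  congr 2
  push_cast
  ring

end Eigenbasis

theorem sum_phase_mul_eq_windowL (N : ℕ) (α : Fin N → ℂ) (Δ : ℝ) (z : ℤ) :
    ∑ s : Fin N, α s / (Real.sqrt N : ℂ) *
        Complex.exp (-(2 * (Real.pi : ℂ) * Complex.I * ((s : ℕ) : ℂ) * (z : ℂ)) / (N : ℂ)) *
        Complex.exp (Complex.I * (((s : ℕ) : ℝ) : ℂ) * (Δ : ℂ))
      = windowL N α (Δ - 2 * Real.pi * (z : ℝ) / N) := by
  rw [windowL, Finset.mul_sum]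
  refine Finset.sum_congr rfl fun s _ => ?_
  rw [mul_assoc, ← Complex.exp_add, div_mul_eq_mul_div, one_div_mul_eq_div]
  congr 3
  push_cast
  ring

theorem sum_prod_phase_eq_prod_windowL {N D : ℕ} (α : Fin N → ℂ) (ω : Fin D → ℤ)
    (Δ : Fin D → ℝ) :
    ∑ t : Fin D → Fin N,
        (∏ k, α (t k) / (Real.sqrt N : ℂ) *
          Complex.exp (-(2 * (Real.pi : ℂ) * Complex.I * ((t k : ℕ) : ℂ) * (ω k : ℂ)) / (N : ℂ))) *
        ∏ j, Complex.exp (Complex.I * (((t j.rev : ℕ) : ℝ) : ℂ) * (Δ j : ℂ))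
      = ∏ j, windowL N α (Δ j - 2 * Real.pi * (ω j.rev : ℝ) / N) := by
  have hrev : ∀ t : Fin D → Fin N,
      ∏ j, Complex.exp (Complex.I * (((t j.rev : ℕ) : ℝ) : ℂ) * (Δ j : ℂ)) =
        ∏ k, Complex.exp (Complex.I * (((t k : ℕ) : ℝ) : ℂ) * (Δ k.rev : ℂ)) := fun t =>
    Fintype.prod_equiv Fin.revPerm _ _ fun j => by simp
  simp_rw [hrev, ← Finset.prod_mul_distrib]
  rw [← Fintype.prod_sum (fun k (s : Fin N) => α s / (Real.sqrt N : ℂ) *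
      Complex.exp (-(2 * (Real.pi : ℂ) * Complex.I * ((s : ℕ) : ℂ) * (ω k : ℂ)) / (N : ℂ)) *
      Complex.exp (Complex.I * (((s : ℕ) : ℝ) : ℂ) * (Δ k.rev : ℂ)))]
  simp_rw [sum_phase_mul_eq_windowL]
  exact Fintype.prod_equiv Fin.revPerm _ _ fun k => by simp

/-- For `j : Fin D`, `t j` and `ω j` stand for `t_{j+1}` and `ω_{j+1}`, and `chain m n` for
`(m, n₁, …, n_D)`, so that the `j = 1` factors join the product over `j`. -/
theorem gqpe_amplitude_and_probability_general
    (M N D : ℕ)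
    (H : Matrix (Fin M) (Fin M) ℂ)
    (v : Fin M → Fin M → ℂ) (lam : Fin M → ℝ)
    (hortho : ∀ m n, star (v m) ⬝ᵥ v n = if m = n then (1 : ℂ) else 0)
    (heig : ∀ n, H *ᵥ v n = (lam n : ℂ) • v n)
    (V : Fin (D + 1) → Matrix (Fin M) (Fin M) ℂ)
    (α : Fin N → ℂ) (n₀ : Fin M) (ω : Fin D → ℤ)
    (amp : Fin M → ℂ)
    (hamp : ∀ m : Fin M, amp m =
      ∑ t : Fin D → Fin N,
        (∏ k : Fin D, (α (t k) / (Real.sqrt N : ℂ)) *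
          Complex.exp (-(2 * (Real.pi : ℂ) * Complex.I * ((t k : ℕ) : ℂ) *
            ((ω k : ℤ) : ℂ)) / (N : ℂ))) *
        (star (v m) ⬝ᵥ
          ((((List.finRange D).map
              (fun j => iPic H (V j.castSucc) ((t j.rev : ℕ) : ℝ))).prod *
            V (Fin.last D)) *ᵥ v n₀))) :
    (∀ m : Fin M, amp m
      = ∑ n : Fin D → Fin M,
          matElem v (V (Fin.last D)) (chain m n (Fin.last D)) n₀ *
          ∏ j : Fin D,
            matElem v (V j.castSucc) (chain m n j.castSucc) (chain m n j.succ) *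
            windowL N α (lam (chain m n j.castSucc) - lam (chain m n j.succ)
              - 2 * Real.pi * ((ω j.rev : ℤ) : ℝ) / N)) ∧
    (∑ m : Fin M, ‖amp m‖ ^ 2
      = ∑ m : Fin M, ‖
          (∑ n : Fin D → Fin M,
            matElem v (V (Fin.last D)) (chain m n (Fin.last D)) n₀ *
            ∏ j : Fin D,
              matElem v (V j.castSucc) (chain m n j.castSucc) (chain m n j.succ) *
              windowL N α (lam (chain m n j.castSucc) - lam (chain m n j.succ)
                - 2 * Real.pi * ((ω j.rev : ℤ) : ℝ) / N))‖ ^ 2) := by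
  have hamp_eq : ∀ m : Fin M, amp m
      = ∑ n : Fin D → Fin M,
          matElem v (V (Fin.last D)) (chain m n (Fin.last D)) n₀ *
          ∏ j : Fin D,
            matElem v (V j.castSucc) (chain m n j.castSucc) (chain m n j.succ) *
            windowL N α (lam (chain m n j.castSucc) - lam (chain m n j.succ)
              - 2 * Real.pi * ((ω j.rev : ℤ) : ℝ) / N) := by
    intro m
    simp_rw [hamp m, ← matElem.eq_1, matElem_list_prod_mul hortho, matElem_iPic hortho heig,
      Finset.prod_mul_distrib, ← sum_prod_phase_eq_prod_windowL α ω, Finset.mul_sum]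
    rw [Finset.sum_comm]
    refine Finset.sum_congr rfl fun n _ => Finset.sum_congr rfl fun t _ => ?_
    simp only [Finset.prod_mul_distrib]
    ring
  exact ⟨hamp_eq, Finset.sum_congr rfl fun m _ => by rw [hamp_eq m]⟩

/-- GQPE amplitude and measurement probability underlying the complete-square
simplification: the amplitude of the GQPE circuit onto the frequency outcome
`(ω₁,…,ω_D)` and final system eigenstate `|λ_m⟩` is
`Σ_{n₁,…,n_D} V^(0)_{m n₁} (∏_{j=2}^D V^(j-1)_{n_{j-1} n_j}) V^(D)_{n_D n₀}
  · L(λ_m - λ_{n₁} - 2πω_D/N) · ∏_{j=2}^D L(λ_{n_{j-1}} - λ_{n_j} - 2πω_{D-j+1}/N)`,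
and the probability of the frequency outcome upon measuring all registers is the sum
over `m` of the squared modulus of this amplitude. Here, for `j : Fin D`, `t j`
encodes `t_{j+1}`, `ω j` encodes `ω_{j+1}`, and `chain m n : Fin (D+1) → Fin M`
encodes `(m, n₁, …, n_D)` (so that the `j = 1` window/matrix-element factor is merged
into the product over `j`). -/
theorem gqpe_amplitude_and_probability
    (M N D : ℕ) (hD : 1 ≤ D) (hN : 1 ≤ N)
    (H : Matrix (Fin M) (Fin M) ℂ) (hH : H.IsHermitian)
    (v : Fin M → Fin M → ℂ) (lam : Fin M → ℝ)
    (hortho : ∀ m n, star (v m) ⬝ᵥ v n = if m = n then (1 : ℂ) else 0)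
    (heig : ∀ n, H *ᵥ v n = (lam n : ℂ) • v n)
    (V : Fin (D + 1) → Matrix (Fin M) (Fin M) ℂ)
    (α : Fin N → ℂ) (n₀ : Fin M) (ω : Fin D → ℤ)
    (amp : Fin M → ℂ)
    (hamp : ∀ m : Fin M, amp m =
      ∑ t : Fin D → Fin N,
        (∏ k : Fin D, (α (t k) / (Real.sqrt N : ℂ)) *
          Complex.exp (-(2 * (Real.pi : ℂ) * Complex.I * ((t k : ℕ) : ℂ) *
            ((ω k : ℤ) : ℂ)) / (N : ℂ))) *
        (star (v m) ⬝ᵥ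
          ((((List.finRange D).map
              (fun j => iPic H (V j.castSucc) ((t j.rev : ℕ) : ℝ))).prod *
            V (Fin.last D)) *ᵥ v n₀))) :
    (∀ m : Fin M, amp m
      = ∑ n : Fin D → Fin M,
          matElem v (V (Fin.last D)) (chain m n (Fin.last D)) n₀ *
          ∏ j : Fin D,
            matElem v (V j.castSucc) (chain m n j.castSucc) (chain m n j.succ) *
            windowL N α (lam (chain m n j.castSucc) - lam (chain m n j.succ)
              - 2 * Real.pi * ((ω j.rev : ℤ) : ℝ) / N)) ∧
    (∑ m : Fin M, ‖amp m‖ ^ 2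
      = ∑ m : Fin M, ‖
          (∑ n : Fin D → Fin M,
            matElem v (V (Fin.last D)) (chain m n (Fin.last D)) n₀ *
            ∏ j : Fin D,
              matElem v (V j.castSucc) (chain m n j.castSucc) (chain m n j.succ) *
              windowL N α (lam (chain m n j.castSucc) - lam (chain m n j.succ)
                - 2 * Real.pi * ((ω j.rev : ℤ) : ℝ) / N))‖ ^ 2) :=
  gqpe_amplitude_and_probability_general M N D H v lam hortho heig V α n₀ ω amp hamp
end

section
/- Let μ be a Hermitian M×M complex matrix, let α_0,…,α_{N−1} and β_0,…,β_{N−1} be two sets of window coefficients with associated window functions L_a(ω) := (1/√N) Σ_k α_k e^{ikω} and L_b(ω) := (1/√N) Σ_k β_k e^{ikω}. Then for all eigenbasis indices n₀, m ∈ {0,…,M−1} and all integers ω₁, ω₂, the amplitude of the resonant Raman GQPE circuit satisfies: Σ_{t₁,t₂=0}^{N−1} (α_{t₁} β_{t₂} / N) e^{−2πi(ω₁ t₁ + ω₂ t₂)/N} ⟨λ_m| e^{−iHt₁} μ e^{−iHt₂} μ |λ_{n₀}⟩ = Σ_{n₁=0}^{M−1} μ_{m n₁} μ_{n₁ n₀}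 · L_a(−λ_m − 2πω₁/N) · L_b(−λ_{n₁} − 2πω₂/N). -/
open Matrix Complex BigOperators

/-!
Each `timeEvo H s` acts on the eigenvector `v n` by the phase `e^{isλ_n}` (termwise on the
exponential series). Inserting the resolution of the identity `∑ₖ |λ_k⟩⟨λ_k|` (complete, since these
are `M` orthonormal vectors in `ℂ^M`) between the two dipole factors turns the amplitude into
`∑ₖ μ_{mk} μ_{kn₀} e^{-it₁λ_m} e^{-it₂λ_k}`. The double sum over `t₁, t₂` then factors, and each factor
is a window function evaluated at the shifted frequency.
-/

open NormedSpace in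
theorem Matrix.exp_mulVec_of_mulVec_eq_smul {ι : Type*} [Fintype ι] [DecidableEq ι]
    {A : Matrix ι ι ℂ} {x : ι → ℂ} {c : ℂ} (h : A *ᵥ x = c • x) :
    exp A *ᵥ x = Complex.exp c • x := by
  let : NormedRing (Matrix ι ι ℂ) := Matrix.linftyOpNormedRing
  let : NormedAlgebra ℂ (Matrix ι ι ℂ) := Matrix.linftyOpNormedAlgebra
  have hpow (k : ℕ) : A ^ k *ᵥ x = c ^ k • x := by
    induction k with
    | zero => simp
    | succ k ih => rw [pow_succ', ← mulVec_mulVec, ih, mulVec_smul, h, smul_smul, ← pow_succ]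
  have hmat := (exp_series_hasSum_exp' (𝕂 := ℂ) A).map (mulVec.addMonoidHomLeft x)
    (continuous_id.matrix_mulVec continuous_const)
  have hscalar := (exp_series_hasSum_exp' (𝕂 := ℂ) c).smul_const x
  rw [← Complex.exp_eq_exp_ℂ] at hscalar
  refine hmat.unique (hscalar.congr_fun fun k => ?_)
  change ((k.factorial : ℂ)⁻¹ • A ^ k) *ᵥ x = _
  rw [smul_mulVec, hpow, smul_smul, smul_eq_mul]

theorem dotProduct_sum_smul_of_orthonormal {ι : Type*} [Fintype ι] [DecidableEq ι]
    {v : ι → ι → ℂ} (hortho : ∀ i j, star (v i) ⬝ᵥ v j = if i = j then 1 else 0)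
    (f : ι → ℂ) (i : ι) : star (v i) ⬝ᵥ ∑ j, f j • v j = f i := by
  simp [dotProduct_sum, dotProduct_smul, hortho]

theorem sum_dotProduct_smul_of_orthonormal {ι : Type*} [Fintype ι] [DecidableEq ι]
    {v : ι → ι → ℂ} (hortho : ∀ i j, star (v i) ⬝ᵥ v j = if i = j then 1 else 0)
    (x : ι → ℂ) : ∑ k, (star (v k) ⬝ᵥ x) • v k = x := by
  -- `C` maps `x` to its coordinates; `C * Cᴴ = 1` forces `Cᴴ * C = 1` for square matrices.
  let C : Matrix ι ι ℂ := Matrix.of fun i j => star (v i j)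
  have hCC : C * Cᴴ = 1 := by
    ext i j
    simpa [C, mul_apply, one_apply, dotProduct] using hortho i j
  have hinj : Function.Injective (C *ᵥ ·) := fun y z hyz => by
    simpa [mulVec_mulVec, mul_eq_one_comm.mp hCC] using congrArg (Cᴴ *ᵥ ·) hyz
  exact hinj (funext fun i => dotProduct_sum_smul_of_orthonormal hortho _ i)

theorem timeEvo_mulVec_of_mulVec_eq_smul {M : ℕ} {H : Matrix (Fin M) (Fin M) ℂ}
    {x : Fin M → ℂ} {l : ℂ} (h : H *ᵥ x = l • x) (s : ℝ) :
    timeEvo H s *ᵥ x = Complex.exp (s * I * l) • x :=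
  Matrix.exp_mulVec_of_mulVec_eq_smul (by rw [smul_mulVec, h, smul_smul])

section matElem

variable {M : ℕ} {v : Fin M → Fin M → ℂ}

theorem matElem_mul (hortho : ∀ i j, star (v i) ⬝ᵥ v j = if i = j then 1 else 0)
    (A B : Matrix (Fin M) (Fin M) ℂ) (m n : Fin M) :
    matElem v (A * B) m n = ∑ k, matElem v A m k * matElem v B k n := by
  unfold matElem
  conv_lhs => rw [← mulVec_mulVec, ← sum_dotProduct_smul_of_orthonormal hortho (B *ᵥ v n)]
  simp only [mulVec_sum, mulVec_smul, dotProduct_sum, dotProduct_smul, smul_eq_mul, mul_comm]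

variable {H : Matrix (Fin M) (Fin M) ℂ} {lam : Fin M → ℝ}

theorem matElem_mul_timeEvo (heig : ∀ n, H *ᵥ v n = (lam n : ℂ) • v n)
    (A : Matrix (Fin M) (Fin M) ℂ) (s : ℝ) (m n : Fin M) :
    matElem v (A * timeEvo H s) m n = matElem v A m n * Complex.exp (s * I * lam n) := by
  rw [matElem, ← mulVec_mulVec, timeEvo_mulVec_of_mulVec_eq_smul (heig n), mulVec_smul,
    dotProduct_smul, smul_eq_mul, mul_comm, matElem]

theorem matElem_timeEvo_mul (hortho : ∀ i j, star (v i) ⬝ᵥ v j = if i = j then 1 else 0)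
    (heig : ∀ n, H *ᵥ v n = (lam n : ℂ) • v n)
    (A : Matrix (Fin M) (Fin M) ℂ) (s : ℝ) (m n : Fin M) :
    matElem v (timeEvo H s * A) m n = Complex.exp (s * I * lam m) * matElem v A m n := by
  rw [matElem_mul hortho]
  simp [matElem, timeEvo_mulVec_of_mulVec_eq_smul (heig _), dotProduct_smul, hortho]

theorem matElem_timeEvo_mul_mul_timeEvo_mul
    (hortho : ∀ i j, star (v i) ⬝ᵥ v j = if i = j then 1 else 0)
    (heig : ∀ n, H *ᵥ v n = (lam n : ℂ) • v n)
    (A B : Matrix (Fin M) (Fin M) ℂ) (s₁ s₂ : ℝ) (m n : Fin M) :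
    matElem v (timeEvo H s₁ * A * timeEvo H s₂ * B) m n
      = ∑ k, matElem v A m k * matElem v B k n *
          Complex.exp (s₁ * I * lam m) * Complex.exp (s₂ * I * lam k) := by
  rw [matElem_mul hortho]
  refine Finset.sum_congr rfl fun k _ => ?_
  rw [matElem_mul_timeEvo heig, matElem_timeEvo_mul hortho heig]
  ring

end matElem

theorem windowL_neg_sub (N : ℕ) (α : Fin N → ℂ) (l : ℝ) (ω : ℤ) :
    windowL N α (-l - 2 * Real.pi * ω / N)
      = ∑ t : Fin N, α t / Real.sqrt N *
          Complex.exp (-(2 * Real.pi * I * (ω * ((t : ℕ) : ℂ))) / N) *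
          Complex.exp (((-((t : ℕ) : ℝ) : ℝ) : ℂ) * I * l) := by
  rw [windowL, Finset.mul_sum]
  refine Finset.sum_congr rfl fun t _ => ?_
  rw [mul_assoc _ (Complex.exp _), ← Complex.exp_add]
  push_cast
  ring_nf

theorem resonant_raman_gqpe_amplitude_general
    (M N : ℕ)
    (H : Matrix (Fin M) (Fin M) ℂ)
    (v : Fin M → Fin M → ℂ) (lam : Fin M → ℝ)
    (hortho : ∀ m n, star (v m) ⬝ᵥ v n = if m = n then (1 : ℂ) else 0)
    (heig : ∀ n, H *ᵥ v n = (lam n : ℂ) • v n)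
    (μ : Matrix (Fin M) (Fin M) ℂ)
    (α β : Fin N → ℂ) (n₀ m : Fin M) (ω₁ ω₂ : ℤ) :
    (∑ t₁ : Fin N, ∑ t₂ : Fin N,
        (α t₁ * β t₂ / (N : ℂ)) *
        Complex.exp (-(2 * (Real.pi : ℂ) * Complex.I *
          ((ω₁ : ℂ) * ((t₁ : ℕ) : ℂ) + (ω₂ : ℂ) * ((t₂ : ℕ) : ℂ))) / (N : ℂ)) *
        (star (v m) ⬝ᵥ
          ((timeEvo H (-((t₁ : ℕ) : ℝ)) * μ * timeEvo H (-((t₂ : ℕ) : ℝ)) * μ) *ᵥ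
            v n₀)))
      = ∑ n₁ : Fin M,
          matElem v μ m n₁ * matElem v μ n₁ n₀ *
            windowL N α (-(lam m) - 2 * Real.pi * (ω₁ : ℝ) / N) *
            windowL N β (-(lam n₁) - 2 * Real.pi * (ω₂ : ℝ) / N) := by
  simp only [← matElem.eq_1, matElem_timeEvo_mul_mul_timeEvo_mul hortho heig, windowL_neg_sub,
    Finset.mul_sum, Finset.sum_mul]
  have hinvN : (N : ℂ)⁻¹ = (Real.sqrt N : ℂ)⁻¹ * (Real.sqrt N : ℂ)⁻¹ := by
    rw [← mul_inv, ← Complex.ofReal_mul, Real.mul_self_sqrt N.cast_nonneg, Complex.ofReal_natCast]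
  rw [Finset.sum_comm_cycle]
  refine Finset.sum_congr rfl fun k _ => ?_
  rw [Finset.sum_comm]
  refine Finset.sum_congr rfl fun t₂ _ => Finset.sum_congr rfl fun t₁ _ => ?_
  rw [mul_add, neg_add, add_div, Complex.exp_add, div_eq_mul_inv (α t₁ * β t₂), hinvN]
  ring

/-- Amplitude of the resonant Raman GQPE circuit of Fig. 3: with two window registers
(coefficients `α`, `β` and window functions `L_a`, `L_b`) controlling multiplexed time
evolutions interleaved with two applications of the Hermitian dipole operator `μ`,
`Σ_{t₁,t₂} (α_{t₁}β_{t₂}/N) e^{-2πi(ω₁t₁+ω₂t₂)/N} ⟨λ_m|e^{-iHt₁} μ e^{-iHt₂} μ|λ_{n₀}⟩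
  = Σ_{n₁} μ_{m n₁} μ_{n₁ n₀} L_a(-λ_m - 2πω₁/N) L_b(-λ_{n₁} - 2πω₂/N)`. -/
theorem resonant_raman_gqpe_amplitude
    (M N : ℕ) (hN : 1 ≤ N)
    (H : Matrix (Fin M) (Fin M) ℂ) (hH : H.IsHermitian)
    (v : Fin M → Fin M → ℂ) (lam : Fin M → ℝ)
    (hortho : ∀ m n, star (v m) ⬝ᵥ v n = if m = n then (1 : ℂ) else 0)
    (heig : ∀ n, H *ᵥ v n = (lam n : ℂ) • v n)
    (μ : Matrix (Fin M) (Fin M) ℂ) (hμ : μ.IsHermitian)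
    (α β : Fin N → ℂ) (n₀ m : Fin M) (ω₁ ω₂ : ℤ) :
    (∑ t₁ : Fin N, ∑ t₂ : Fin N,
        (α t₁ * β t₂ / (N : ℂ)) *
        Complex.exp (-(2 * (Real.pi : ℂ) * Complex.I *
          ((ω₁ : ℂ) * ((t₁ : ℕ) : ℂ) + (ω₂ : ℂ) * ((t₂ : ℕ) : ℂ))) / (N : ℂ)) *
        (star (v m) ⬝ᵥ
          ((timeEvo H (-((t₁ : ℕ) : ℝ)) * μ * timeEvo H (-((t₂ : ℕ) : ℝ)) * μ) *ᵥ
            v n₀)))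
      = ∑ n₁ : Fin M,
          matElem v μ m n₁ * matElem v μ n₁ n₀ *
            windowL N α (-(lam m) - 2 * Real.pi * (ω₁ : ℝ) / N) *
            windowL N β (-(lam n₁) - 2 * Real.pi * (ω₂ : ℝ) / N) :=
  resonant_raman_gqpe_amplitude_general M N H v lam hortho heig μ α β n₀ m ω₁ ω₂
end
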